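/- Let G be a subgroup of finite index in a group J, let L be a synchronous combing of G over X with constant K, and let T be a set of left coset representatives of G in J. Then the language LT = {wt : w ∈ L, t ∈ T} is a language for J over X ∪ T satisfying the right synchronous fellow traveller condition: any u, u' ∈ LT with u' =_J uy for y ∈ X ∪ T ∪ {e} synchronously fellow travel at a bounded distance. -/

import Mathlib

/-- The group element represented by a word. -/
def evalW {X G : Type*} [Group G] (π : X → G) (w : List X) : G := (w.map π).prod

/-- The group element represented by the length-`t` prefix of a word. -/
def evalP {X G : Type*} [Group G] (π : X → G) (w : List X) (t : ℕ) : G :=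
  ((w.take t).map π).prod

/-- `g` and `h` are at word-metric distance at most `K` (w.r.t. the generators `π x`). -/
def WDistLE {X G : Type*} [Group G] (π : X → G) (K : ℕ) (g h : G) : Prop :=
  ∃ l : List X, l.length ≤ K ∧ g * (l.map π).prod = h

/-- `v` and `w` synchronously `K`-fellow travel. -/
def SyncFT {X G : Type*} [Group G] (π : X → G) (K : ℕ) (v w : List X) : Prop :=
  ∀ t : ℕ, WDistLE π K (evalP π v t) (evalP π w t)

/-- `v` and `w` asynchronously `K`-fellow travel, via a monotone reparametrization
mapping `[0, |v|]` onto `[0, |w|]`. -/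
def AsyncFT {X G : Type*} [Group G] (π : X → G) (K : ℕ) (v w : List X) : Prop :=
  ∃ h : ℕ → ℕ, Monotone h ∧ h 0 = 0 ∧ h v.length = w.length ∧
    ∀ t : ℕ, WDistLE π K (evalP π v t) (evalP π w (h t))

/-- The generating set is inverse-closed. -/
def InvClosed {X G : Type*} [Group G] (π : X → G) : Prop :=
  ∀ x, ∃ x', π x' = (π x)⁻¹

/-- `L` is a language for `G`: it contains a representative of every element. -/
def IsLanguageFor {X G : Type*} [Group G] (π : X → G) (L : Set (List X)) : Prop :=
  ∀ g : G, ∃ w ∈ L, evalW π w = g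

/-- `L` contains exactly one representative of every element. -/
def IsBijectiveLang {X G : Type*} [Group G] (π : X → G) (L : Set (List X)) : Prop :=
  ∀ g : G, ∃! w, w ∈ L ∧ evalW π w = g

/-- The pairs of words for which a combing requires fellow travelling:
`w` represents `v`, or `v` times a generator. -/
def CombRel {X G : Type*} [Group G] (π : X → G) (v w : List X) : Prop :=
  evalW π w = evalW π v ∨ ∃ x, evalW π w = evalW π v * π x

/-- `L` is a synchronous combing with fellow traveller constant `K`. -/
def IsSyncCombing {X G : Type*} [Group G] (π : X → G) (L : Set (List X)) (K : ℕ) : Prop :=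
  IsLanguageFor π L ∧ ∀ v ∈ L, ∀ w ∈ L, CombRel π v w → SyncFT π K v w

/-- `L` is an asynchronous combing with fellow traveller constant `K`. -/
def IsAsyncCombing {X G : Type*} [Group G] (π : X → G) (L : Set (List X)) (K : ℕ) : Prop :=
  IsLanguageFor π L ∧ ∀ v ∈ L, ∀ w ∈ L, CombRel π v w → AsyncFT π K v w

/-!
If `w' t' =_J w t y` with `w, w' ∈ L`, then `w' =_G w g` where `g = t y t'⁻¹` ranges over the
finitely many elements of `G` arising from the Schreier relations. Hence `w` and `w'` are joined
by a bounded number of combing steps and fellow travel; appending the letters `t` and `t'`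
moves the two paths by a bounded amount, since `t⁻¹` has bounded length over `X ∪ T`.
-/

section WordMetric

variable {X G : Type*} [Group G] {π : X → G}

@[simp]
lemma evalW_nil : evalW π [] = 1 := rfl

@[simp]
lemma evalW_cons (x : X) (w : List X) : evalW π (x :: w) = π x * evalW π w := by
  simp [evalW]

@[simp]
lemma evalW_append (v w : List X) : evalW π (v ++ w) = evalW π v * evalW π w := by
  simp [evalW]

lemma evalP_append_of_le_length {v : List X} (w : List X) {s : ℕ} (hs : s ≤ v.length) :
    evalP π (v ++ w) s = evalP π v s := by
  rw [evalP, List.take_append_of_le_length hs, evalP]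

lemma evalP_of_length_le {w : List X} {s : ℕ} (hs : w.length ≤ s) :
    evalP π w s = evalW π w := by
  rw [evalP, List.take_of_length_le hs, evalW]

lemma WDistLE.mono {K K' : ℕ} (hK : K ≤ K') {g h : G} (hgh : WDistLE π K g h) :
    WDistLE π K' g h :=
  let ⟨l, hl, he⟩ := hgh
  ⟨l, hl.trans hK, he⟩

lemma WDistLE.trans {K₁ K₂ : ℕ} {a b c : G} (hab : WDistLE π K₁ a b)
    (hbc : WDistLE π K₂ b c) :
    WDistLE π (K₁ + K₂) a c := by
  obtain ⟨l₁, hl₁, rfl⟩ := hab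
  obtain ⟨l₂, hl₂, rfl⟩ := hbc
  exact ⟨l₁ ++ l₂, by simpa using add_le_add hl₁ hl₂, by simp [mul_assoc]⟩

lemma SyncFT.mono {K K' : ℕ} (hK : K ≤ K') {v w : List X} (h : SyncFT π K v w) :
    SyncFT π K' v w :=
  fun s => (h s).mono hK

lemma SyncFT.trans {K₁ K₂ : ℕ} {u v w : List X} (huv : SyncFT π K₁ u v)
    (hvw : SyncFT π K₂ v w) : SyncFT π (K₁ + K₂) u w :=
  fun s => (huv s).trans (hvw s)

lemma wdistLE_evalP_append_singleton (v : List X) (x : X) (s : ℕ) :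
    WDistLE π 1 (evalP π v s) (evalP π (v ++ [x]) s) :=
  ⟨[x].take (s - v.length), by simp, by simp [evalP, List.take_append]⟩

lemma wdistLE_evalP_append_singleton_left {C : ℕ} {x : X} (hx : WDistLE π C (π x) 1)
    (v : List X) (s : ℕ) : WDistLE π C (evalP π (v ++ [x]) s) (evalP π v s) := by
  by_cases hs : s ≤ v.length
  · rw [evalP_append_of_le_length _ hs]
    exact ⟨[], by simp, by simp⟩
  · rw [evalP_of_length_le (by simp; omega), evalP_of_length_le (by omega)]
    obtain ⟨l, hl, he⟩ := hx
    exact ⟨l, hl, by simp [mul_assoc, he]⟩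

lemma SyncFT.append_singleton {K C : ℕ} {v w : List X} (h : SyncFT π K v w) {x : X}
    (hx : WDistLE π C (π x) 1) (x' : X) : SyncFT π (C + K + 1) (v ++ [x]) (w ++ [x']) :=
  fun s => ((wdistLE_evalP_append_singleton_left hx v s).trans (h s)).trans
    (wdistLE_evalP_append_singleton w x' s)

lemma exists_forall_wdistLE_mul_of_finite {L : Set (List X)} (hL : IsLanguageFor π L)
    {S : Set G} (hS : S.Finite) : ∃ M, ∀ g ∈ S, ∀ a, WDistLE π M a (a * g) := by
  choose w _ hw using hL
  obtain ⟨M, hM⟩ := (hS.image fun g => (w g).length).bddAbove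
  exact ⟨M, fun g hg a => ⟨w g, hM (Set.mem_image_of_mem _ hg), congrArg (a * ·) (hw g)⟩⟩

lemma CombRel.exists_option {v w : List X} (h : CombRel π v w) :
    ∃ y : Option X, evalW π w = evalW π v * y.elim 1 π := by
  rcases h with h | ⟨x, h⟩
  exacts [⟨none, by simpa using h⟩, ⟨some x, h⟩]

end WordMetric

section Combing

variable {X G : Type*} [Group G] {π : X → G} {L : Set (List X)} {K : ℕ}

lemma IsSyncCombing.syncFT_of_evalW_eq_mul (hL : IsSyncCombing π L K) (l : List X)
    {v w : List X} (hv : v ∈ L) (hw : w ∈ L) (h : evalW π w = evalW π v * evalW π l) :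
    SyncFT π ((l.length + 1) * K) v w := by
  induction l generalizing v with
  | nil => simpa using hL.2 v hv w hw (Or.inl (by simpa using h))
  | cons x l ih =>
    obtain ⟨v₁, hv₁, hvv₁⟩ := hL.1 (evalW π v * π x)
    have hstep : SyncFT π K v v₁ := hL.2 v hv v₁ hv₁ (Or.inr ⟨x, hvv₁⟩)
    have hrest := ih hv₁ (by rw [h, hvv₁, evalW_cons, mul_assoc])
    convert hstep.trans hrest using 1
    simp only [List.length_cons]
    ring

lemma IsSyncCombing.syncFT_of_wdistLE (hL : IsSyncCombing π L K) {n : ℕ} {v w : List X}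
    (hv : v ∈ L) (hw : w ∈ L) (h : WDistLE π n (evalW π v) (evalW π w)) :
    SyncFT π ((n + 1) * K) v w := by
  obtain ⟨l, hl, he⟩ := h
  exact (hL.syncFT_of_evalW_eq_mul l hv hw he.symm).mono (by gcongr)

end Combing

section Homomorphism

variable {X Y G H : Type*} [Group G] [Group H] {π : X → G} {σ : Y → H} (φ : G →* H)
  {f : X → Y}

lemma evalW_map (hσ : ∀ x, σ (f x) = φ (π x)) (w : List X) :
    evalW σ (w.map f) = φ (evalW π w) := by
  simp [evalW, map_list_prod, Function.comp_def, hσ]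

lemma evalP_map (hσ : ∀ x, σ (f x) = φ (π x)) (w : List X) (s : ℕ) :
    evalP σ (w.map f) s = φ (evalP π w s) := by
  simp [evalP, ← List.map_take, map_list_prod, Function.comp_def, hσ]

lemma WDistLE.map (hσ : ∀ x, σ (f x) = φ (π x)) {K : ℕ} {g h : G} (hgh : WDistLE π K g h) :
    WDistLE σ K (φ g) (φ h) := by
  obtain ⟨l, hl, rfl⟩ := hgh
  exact ⟨l.map f, by simpa using hl,
    by simpa [evalW] using congrArg (φ g * ·) (evalW_map φ hσ l)⟩

lemma SyncFT.map (hσ : ∀ x, σ (f x) = φ (π x)) {K : ℕ} {v w : List X}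
    (h : SyncFT π K v w) :
    SyncFT σ K (v.map f) (w.map f) := fun s => by
  simpa only [evalP_map φ hσ] using (h s).map φ hσ

end Homomorphism

def transversalLanguage {X : Type*} (L : Set (List X)) (T : Type*) : Set (List (X ⊕ T)) :=
  {u | ∃ w ∈ L, ∃ t : T, u = w.map Sum.inl ++ [Sum.inr t]}

section Transversal

variable {X T J : Type*} [Group J] {G : Subgroup J} {π : X → G} {τ : T → J}

lemma evalW_transversalWord (w : List X) (t : T) :
    evalW (Sum.elim (fun x => (π x : J)) τ) (w.map Sum.inl ++ [Sum.inr t]) =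
      evalW π w * τ t := by
  rw [evalW_append, evalW_map G.subtype (f := Sum.inl) (fun _ => rfl)]
  simp

lemma isLanguageFor_transversalLanguage (hT : ∀ j : J, ∃ t : T, j * (τ t)⁻¹ ∈ G)
    {L : Set (List X)} (hL : IsLanguageFor π L) :
    IsLanguageFor (Sum.elim (fun x => (π x : J)) τ) (transversalLanguage L T) := by
  intro j
  obtain ⟨t, ht⟩ := hT j
  obtain ⟨w, hw, hwj⟩ := hL ⟨j * (τ t)⁻¹, ht⟩
  exact ⟨_, ⟨w, hw, t, rfl⟩, by rw [evalW_transversalWord, hwj]; simp⟩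

end Transversal

theorem stmt6_general {X T J : Type*} [Group J] [Fintype X] [Fintype T] (G : Subgroup J)
    (π : X → G) (τ : T → J)
    (hT : ∀ j : J, ∃! t : T, j * (τ t)⁻¹ ∈ G)
    (L : Set (List X)) (K : ℕ) (hL : IsSyncCombing π L K) :
    IsLanguageFor (Sum.elim (fun x => (π x : J)) τ)
      {u : List (X ⊕ T) | ∃ w ∈ L, ∃ t : T, u = w.map Sum.inl ++ [Sum.inr t]} ∧
    ∃ K' : ℕ, ∀ u ∈ {u : List (X ⊕ T) | ∃ w ∈ L, ∃ t : T, u = w.map Sum.inl ++ [Sum.inr t]},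
      ∀ u' ∈ {u : List (X ⊕ T) | ∃ w ∈ L, ∃ t : T, u = w.map Sum.inl ++ [Sum.inr t]},
        CombRel (Sum.elim (fun x => (π x : J)) τ) u u' →
          SyncFT (Sum.elim (fun x => (π x : J)) τ) K' u u' := by
  set σ : X ⊕ T → J := Sum.elim (fun x => (π x : J)) τ
  have hLT : IsLanguageFor σ (transversalLanguage L T) :=
    isLanguageFor_transversalLanguage (fun j => (hT j).exists) hL.1
  obtain ⟨C, hC⟩ :=
    exists_forall_wdistLE_mul_of_finite hLT (Set.finite_range fun t => (τ t)⁻¹)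
  -- the elements `g_{t,y}` of the Schreier relations `τ t * y = g_{t,y} * τ t'`
  set S : Set G := Subtype.val ⁻¹'
    Set.range fun p : T × Option (X ⊕ T) × T => τ p.1 * p.2.1.elim 1 σ * (τ p.2.2)⁻¹
  obtain ⟨M, hM⟩ := exists_forall_wdistLE_mul_of_finite hL.1
    ((Set.finite_range _).preimage Subtype.val_injective.injOn : S.Finite)
  refine ⟨hLT, C + (M + 1) * K + 1, ?_⟩
  rintro _ ⟨w, hw, t, rfl⟩ _ ⟨w', hw', t', rfl⟩ hrel
  obtain ⟨y, hy⟩ := hrel.exists_option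
  simp only [σ, evalW_transversalWord] at hy
  have hS : (evalW π w)⁻¹ * evalW π w' ∈ S := ⟨(t, y, t'), by
    simp [σ, eq_mul_inv_of_mul_eq hy, mul_assoc]⟩
  have hww' : SyncFT π ((M + 1) * K) w w' :=
    hL.syncFT_of_wdistLE hw hw' (by simpa using hM _ hS (evalW π w))
  refine (hww'.map G.subtype (f := Sum.inl) (σ := σ) fun _ => rfl).append_singleton ?_ _
  simpa [σ] using hC _ ⟨t, rfl⟩ (τ t)

/-- if `G` is of finite index in `J`, `L` is a synchronous combing of `G`
with constant `K`, and `T` is a set of left coset representatives, then `LT` is a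
language for `J` over `X ∪ T` satisfying the right synchronous fellow traveller
condition. -/
theorem stmt6 {X T J : Type*} [Group J] [Fintype X] [Fintype T] (G : Subgroup J)
    [G.FiniteIndex] (π : X → G) (hinv : InvClosed π) (τ : T → J)
    (hT : ∀ j : J, ∃! t : T, j * (τ t)⁻¹ ∈ G)
    (L : Set (List X)) (K : ℕ) (hL : IsSyncCombing π L K) :
    IsLanguageFor (Sum.elim (fun x => (π x : J)) τ)
      {u : List (X ⊕ T) | ∃ w ∈ L, ∃ t : T, u = w.map Sum.inl ++ [Sum.inr t]} ∧
    ∃ K' : ℕ, ∀ u ∈ {u : List (X ⊕ T) | ∃ w ∈ L, ∃ t : T, u = w.map Sum.inl ++ [Sum.inr t]},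
      ∀ u' ∈ {u : List (X ⊕ T) | ∃ w ∈ L, ∃ t : T, u = w.map Sum.inl ++ [Sum.inr t]},
        CombRel (Sum.elim (fun x => (π x : J)) τ) u u' →
          SyncFT (Sum.elim (fun x => (π x : J)) τ) K' u u' :=
  stmt6_general G π τ hT L K hL
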